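/- Let α ∈ (0,1) be fixed and X a real-valued random variable on a probability space (Ω,𝒜,P). Suppose f : ℝ → ℝ satisfies E[(f∘X)⁻] < ∞ and the strict conditions f(x) < f(x_{(α)}) for all x < x_{(α)} and f(x) > f(x_{(α)}) for all x > x_{(α)}. Let A ∈ 𝒜 be an event with P[A] ≥ α and E[|f∘X|·1_A] < ∞. If TM_α(f∘X) = E[f∘X | A], then P[A ∩ {X > x_{(α)}}] = 0, and either P[X < x_{(α)}] = 0, or (P[X < x_{(α)}] > 0, P[(Ω \ A) ∩ {X < x_{(α)}}] = 0, and P[A] = α). -/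

import Mathlib

open MeasureTheory ProbabilityTheory Filter
open scoped Classical

noncomputable section

variable {Ω : Type*} [MeasurableSpace Ω]

/-- Lower α-quantile: inf {x | P[X ≤ x] ≥ α}. -/
def lowerQuantile (P : Measure Ω) (X : Ω → ℝ) (α : ℝ) : ℝ :=
  sInf {x : ℝ | α ≤ (P {ω | X ω ≤ x}).toReal}

/-- Upper α-quantile: inf {x | P[X ≤ x] > α}. -/
def upperQuantile (P : Measure Ω) (X : Ω → ℝ) (α : ℝ) : ℝ :=
  sInf {x : ℝ | α < (P {ω | X ω ≤ x}).toReal}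

/-- α-tail mean. -/
def tailMean (P : Measure Ω) (X : Ω → ℝ) (α : ℝ) : ℝ :=
  α⁻¹ * ((∫ ω in {ω | X ω ≤ lowerQuantile P X α}, X ω ∂P)
    + lowerQuantile P X α * (α - (P {ω | X ω ≤ lowerQuantile P X α}).toReal))

/-- Expected Shortfall. -/
def ES (P : Measure Ω) (X : Ω → ℝ) (α : ℝ) : ℝ := - tailMean P X α

/-- Conditional expectation given an event: E[X | A] = E[X·1_A] / P[A]. -/
def condExpEvent (P : Measure Ω) (X : Ω → ℝ) (A : Set Ω) : ℝ :=
  (∫ ω in A, X ω ∂P) / (P A).toReal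

/-- Lower tail conditional expectation. -/
def TCElow (P : Measure Ω) (X : Ω → ℝ) (α : ℝ) : ℝ :=
  - condExpEvent P X {ω | X ω ≤ lowerQuantile P X α}

/-- Upper tail conditional expectation. -/
def TCEup (P : Measure Ω) (X : Ω → ℝ) (α : ℝ) : ℝ :=
  - condExpEvent P X {ω | X ω ≤ upperQuantile P X α}

/-- Worst conditional expectation. -/
def WCE (P : Measure Ω) (X : Ω → ℝ) (α : ℝ) : ℝ :=
  - sInf {y : ℝ | ∃ A : Set Ω, MeasurableSet A ∧ α < (P A).toReal ∧ y = condExpEvent P X A}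

/-- Conditional value-at-risk. -/
def CVaR (P : Measure Ω) (X : Ω → ℝ) (α : ℝ) : ℝ :=
  sInf {y : ℝ | ∃ s : ℝ, y = (∫ ω, max (-(X ω - s)) 0 ∂P) / α - s}

/-- Modified indicator 1^{(α)}_{X ≤ x}. -/
def modInd (P : Measure Ω) (X : Ω → ℝ) (α x : ℝ) (ω : Ω) : ℝ :=
  if P {a | X a = x} = 0 then Set.indicator {a | X a ≤ x} (fun _ => (1 : ℝ)) ω
  else Set.indicator {a | X a ≤ x} (fun _ => (1 : ℝ)) ω
    + ((α - (P {a | X a ≤ x}).toReal) / (P {a | X a = x}).toReal)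
      * Set.indicator {a | X a = x} (fun _ => (1 : ℝ)) ω

/-- Sum of the k smallest entries of (X 0 ω, ..., X (n-1) ω). -/
def tailSum (Xs : ℕ → Ω → ℝ) (n k : ℕ) (ω : Ω) : ℝ :=
  ((List.insertionSort (· ≤ ·) (List.ofFn fun i : Fin n => Xs i ω)).take k).sum

/-! Put `c = f(x_(α))` and `g = f∘X - c`. Since `f` crosses the level `c` strictly at the quantile,
`{f∘X ≤ c} = {X ≤ x_(α)}` and `{f∘X < c} = {X < x_(α)}`, so `c` is itself an α-quantile of `f∘X`
and the tail mean may be evaluated there: `α (TM_α(f∘X) - c) = E[g; g ≤ 0]`. With `β = P[A] ≥ α`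
the hypothesis becomes `β E[g; g ≤ 0] = α E[g; A]`; splitting both integrals along
`A ∩ {g ≤ 0}` gives `α E[g; A \ {g ≤ 0}] - β E[g; {g ≤ 0} \ A] = (β - α) E[g; A ∩ {g ≤ 0}]`,
a nonnegative quantity equal to a nonpositive one. Hence all three terms vanish, and as `g > 0`
off `{g ≤ 0}` and `g < 0` on `{X < x_(α)}`, the vanishing integrals are the claimed null sets. -/

open Set

section Quantile

variable {μ : Measure ℝ} {α : ℝ}

lemma bddBelow_setOf_le_cdf (hα : 0 < α) : BddBelow {x | α ≤ cdf μ x} := by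
  obtain ⟨b, hb⟩ := eventually_atBot.1 ((tendsto_cdf_atBot μ).eventually (eventually_lt_nhds hα))
  exact ⟨b, fun x hx => le_of_not_gt fun hxb => (hb x hxb.le).not_ge hx⟩

lemma nonempty_setOf_le_cdf (hα : α < 1) : {x | α ≤ cdf μ x}.Nonempty :=
  (((tendsto_cdf_atTop μ).eventually (eventually_gt_nhds hα)).exists).imp fun _ => le_of_lt

lemma le_cdf_sInf_setOf_le_cdf (hα : α < 1) : α ≤ cdf μ (sInf {x | α ≤ cdf μ x}) := by
  set q := sInf {x | α ≤ cdf μ x}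
  refine ge_of_tendsto (((cdf μ).right_continuous q).mono Ioi_subset_Ici_self) ?_
  filter_upwards [self_mem_nhdsWithin] with y hy
  obtain ⟨x, hx, hxy⟩ := exists_lt_of_csInf_lt (nonempty_setOf_le_cdf hα) hy
  exact hx.trans (monotone_cdf μ hxy.le)

lemma measure_Iio_sInf_setOf_le_cdf_le [IsProbabilityMeasure μ] (hα : 0 < α) :
    μ (Iio (sInf {x | α ≤ cdf μ x})) ≤ ENNReal.ofReal α := by
  set q := sInf {x | α ≤ cdf μ x}
  rw [← measure_cdf μ, StieltjesFunction.measure_Iio _ (tendsto_cdf_atBot μ), sub_zero]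
  refine ENNReal.ofReal_le_ofReal (le_of_tendsto ((monotone_cdf μ).tendsto_leftLim q) ?_)
  filter_upwards [self_mem_nhdsWithin] with y (hy : y < q)
  exact le_of_not_ge fun h => (csInf_le (bddBelow_setOf_le_cdf hα) h).not_gt hy

end Quantile

section LowerQuantile

variable {P : Measure Ω} [IsProbabilityMeasure P] {Z : Ω → ℝ} {α : ℝ}

lemma cdf_map_eq (hZ : Measurable Z) (x : ℝ) : cdf (P.map Z) x = (P {ω | Z ω ≤ x}).toReal := by
  have := Measure.isProbabilityMeasure_map (μ := P) hZ.aemeasurable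
  rw [cdf_eq_real, map_measureReal_apply hZ measurableSet_Iic]
  rfl

lemma lowerQuantile_eq_sInf_cdf (hZ : Measurable Z) :
    lowerQuantile P Z α = sInf {x | α ≤ cdf (P.map Z) x} := by
  simp only [lowerQuantile, cdf_map_eq hZ]

lemma lowerQuantile_le (hZ : Measurable Z) (hα : 0 < α) {t : ℝ}
    (ht : α ≤ (P {ω | Z ω ≤ t}).toReal) : lowerQuantile P Z α ≤ t := by
  have := Measure.isProbabilityMeasure_map (μ := P) hZ.aemeasurable
  rw [lowerQuantile_eq_sInf_cdf hZ]
  exact csInf_le (bddBelow_setOf_le_cdf hα) (ht.trans (cdf_map_eq hZ t).ge)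

lemma le_measure_le_lowerQuantile (hZ : Measurable Z) (hα : α < 1) :
    α ≤ (P {ω | Z ω ≤ lowerQuantile P Z α}).toReal := by
  have := Measure.isProbabilityMeasure_map (μ := P) hZ.aemeasurable
  rw [← cdf_map_eq hZ, lowerQuantile_eq_sInf_cdf hZ]
  exact le_cdf_sInf_setOf_le_cdf hα

lemma measure_lt_lowerQuantile_le (hZ : Measurable Z) (hα : 0 < α) :
    (P {ω | Z ω < lowerQuantile P Z α}).toReal ≤ α := by
  have := Measure.isProbabilityMeasure_map (μ := P) hZ.aemeasurable
  have h := measure_Iio_sInf_setOf_le_cdf_le (μ := P.map Z) hα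
  rw [← lowerQuantile_eq_sInf_cdf hZ, Measure.map_apply hZ measurableSet_Iio] at h
  exact ENNReal.toReal_le_of_le_ofReal hα.le h

end LowerQuantile

section Separation

variable {f : ℝ → ℝ} {q : ℝ}

lemma lt_apply_iff_of_separates (hlt : ∀ x < q, f x < f q) (hgt : ∀ x, q < x → f q < f x)
    (x : ℝ) : f q < f x ↔ q < x := by
  refine ⟨fun h => lt_of_not_ge fun hx => ?_, hgt x⟩
  rcases hx.lt_or_eq with hx | rfl
  exacts [(hlt x hx).not_gt h, h.false]

lemma apply_lt_iff_of_separates (hlt : ∀ x < q, f x < f q) (hgt : ∀ x, q < x → f q < f x)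
    (x : ℝ) : f x < f q ↔ x < q := by
  refine ⟨fun h => lt_of_not_ge fun hx => ?_, hlt x⟩
  rcases hx.lt_or_eq with hx | rfl
  exacts [(hgt x hx).not_gt h, h.false]

lemma apply_le_iff_of_separates (hlt : ∀ x < q, f x < f q) (hgt : ∀ x, q < x → f q < f x)
    (x : ℝ) : f x ≤ f q ↔ x ≤ q := by
  simpa only [not_lt] using (lt_apply_iff_of_separates hlt hgt x).not

end Separation

lemma integrableOn_setOf_le_of_integrable_negPart {μ : Measure Ω} [IsFiniteMeasure μ]
    {Y : Ω → ℝ} (hY : Measurable Y) (hneg : Integrable (fun ω => max (-(Y ω)) 0) μ) (t : ℝ) :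
    IntegrableOn Y {ω | Y ω ≤ t} μ := by
  refine Integrable.mono' ((integrable_const |t|).add hneg).restrict
    hY.aestronglyMeasurable.restrict (ae_restrict_of_forall_mem (hY measurableSet_Iic) ?_)
  intro ω (hω : Y ω ≤ t)
  rw [Pi.add_apply, Real.norm_eq_abs, abs_le]
  constructor <;> linarith [le_abs_self t, abs_nonneg t, le_max_left (-(Y ω)) 0,
    le_max_right (-(Y ω)) 0]

section TailMean

variable {P : Measure Ω} [IsProbabilityMeasure P] {Y : Ω → ℝ} {α : ℝ}

-- For α-quantiles `q < t`, `Y` puts no mass on `(q, t)`, and the correction term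
-- `t (α - P[Y ≤ t])` cancels its atom at `t`.
lemma tailMean_eq_of_isQuantile (hY : Measurable Y)
    (hneg : Integrable (fun ω => max (-(Y ω)) 0) P) (hα : α ∈ Ioo 0 1) {t : ℝ}
    (hlt : (P {ω | Y ω < t}).toReal ≤ α) (hle : α ≤ (P {ω | Y ω ≤ t}).toReal) :
    tailMean P Y α = α⁻¹ * ((∫ ω in {ω | Y ω ≤ t}, Y ω ∂P)
      + t * (α - (P {ω | Y ω ≤ t}).toReal)) := by
  set q := lowerQuantile P Y α
  rcases (lowerQuantile_le hY hα.1 hle).eq_or_lt with hqt | hqt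
  · rw [tailMean, hqt]
  have hsub : {ω | Y ω ≤ q} ⊆ {ω | Y ω < t} := fun ω (h : Y ω ≤ q) => h.trans_lt hqt
  have hmass : (P {ω | Y ω ≤ q}).toReal = (P {ω | Y ω < t}).toReal :=
    le_antisymm (measureReal_mono hsub)
      (hlt.trans (le_measure_le_lowerQuantile hY hα.2))
  have hae : {ω | Y ω ≤ q} =ᵐ[P] {ω | Y ω < t} :=
    ae_eq_of_subset_of_measure_ge hsub
      ((ENNReal.toReal_eq_toReal_iff' (measure_ne_top _ _) (measure_ne_top _ _)).1 hmass).ge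
      (hY measurableSet_Iic).nullMeasurableSet (measure_ne_top _ _)
  have hunion : {ω | Y ω ≤ t} = {ω | Y ω < t} ∪ {ω | Y ω = t} := by
    ext ω; exact le_iff_lt_or_eq (a := Y ω)
  have hdisj : Disjoint {ω | Y ω < t} {ω | Y ω = t} :=
    disjoint_left.2 fun ω (h : Y ω < t) (h' : Y ω = t) => h.ne h'
  have hmeas_eq : MeasurableSet {ω | Y ω = t} := hY (measurableSet_singleton t)
  have hint_split : ∫ ω in {ω | Y ω ≤ t}, Y ω ∂P
      = (∫ ω in {ω | Y ω ≤ q}, Y ω ∂P) + t * (P {ω | Y ω = t}).toReal := by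
    have hint : IntegrableOn Y ({ω | Y ω < t} ∪ {ω | Y ω = t}) P :=
      hunion ▸ integrableOn_setOf_le_of_integrable_negPart hY hneg t
    rw [setIntegral_congr_set hae, hunion, setIntegral_union hdisj hmeas_eq hint.left_of_union
      hint.right_of_union, setIntegral_congr_fun hmeas_eq fun ω (h : Y ω = t) => h,
      setIntegral_const, smul_eq_mul, measureReal_def, mul_comm]
  have hmass_split : (P {ω | Y ω ≤ t}).toReal
      = (P {ω | Y ω ≤ q}).toReal + (P {ω | Y ω = t}).toReal := by
    rw [hmass, hunion, ← measureReal_def, measureReal_union hdisj hmeas_eq]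
    rfl
  have hq_mass : (P {ω | Y ω ≤ q}).toReal = α :=
    le_antisymm (hmass ▸ hlt) (le_measure_le_lowerQuantile hY hα.2)
  rw [tailMean, hint_split, hmass_split, hq_mass]
  ring

end TailMean

lemma measure_inter_setOf_pos_eq_zero_of_setIntegral_eq_zero {μ : Measure Ω} {g : Ω → ℝ}
    {s : Set Ω} (hs : MeasurableSet s) (hg : ∀ ω ∈ s, 0 ≤ g ω) (hgi : IntegrableOn g s μ)
    (h0 : ∫ ω in s, g ω ∂μ = 0) : μ (s ∩ {ω | 0 < g ω}) = 0 := by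
  have h := setIntegral_pos_iff_support_of_nonneg_ae (ae_restrict_of_forall_mem hs hg) hgi
  rw [h0, lt_self_iff_false, false_iff, not_lt, nonpos_iff_eq_zero] at h
  refine measure_mono_null ?_ h
  rintro ω ⟨hω, hpos⟩
  exact ⟨(hpos : 0 < g ω).ne', hω⟩

lemma measure_inter_setOf_neg_eq_zero_of_setIntegral_eq_zero {μ : Measure Ω} {g : Ω → ℝ}
    {s : Set Ω} (hs : MeasurableSet s) (hg : ∀ ω ∈ s, g ω ≤ 0) (hgi : IntegrableOn g s μ)
    (h0 : ∫ ω in s, g ω ∂μ = 0) : μ (s ∩ {ω | g ω < 0}) = 0 := by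
  simpa using measure_inter_setOf_pos_eq_zero_of_setIntegral_eq_zero (g := fun ω => -g ω) hs
    (fun ω hω => neg_nonneg.2 (hg ω hω)) hgi.neg (by rw [integral_neg, h0, neg_zero])

lemma eq_zero_of_mul_add_eq_mul_add {α β a b d : ℝ} (hα : 0 < α) (hαβ : α ≤ β) (ha : a ≤ 0)
    (hb : 0 ≤ b) (hd : d ≤ 0) (h : β * (a + d) = α * (a + b)) :
    b = 0 ∧ d = 0 ∧ (β = α ∨ a = 0) := by
  have hαβa : 0 ≤ (β - α) * -a := mul_nonneg (sub_nonneg.2 hαβ) (neg_nonneg.2 ha)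
  have hb0 : b = 0 := le_antisymm (by nlinarith) hb
  have hd0 : d = 0 := le_antisymm hd (by nlinarith)
  have hβα : (β - α) * a = 0 := by linear_combination h - β * hd0 + α * hb0
  exact ⟨hb0, hd0, (mul_eq_zero.1 hβα).imp_left sub_eq_zero.1⟩

theorem tailMean_eq_condExpEvent_necessary_of_isQuantile {P : Measure Ω} [IsProbabilityMeasure P]
    {Y : Ω → ℝ} {α : ℝ} (hY : Measurable Y) (hneg : Integrable (fun ω => max (-(Y ω)) 0) P)
    (hα : α ∈ Ioo 0 1) {c : ℝ} (hlt : (P {ω | Y ω < c}).toReal ≤ α)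
    (hle : α ≤ (P {ω | Y ω ≤ c}).toReal) {A : Set Ω} (hA : MeasurableSet A)
    (hPA : α ≤ (P A).toReal) (hAint : IntegrableOn Y A P)
    (heq : tailMean P Y α = condExpEvent P Y A) :
    P (A ∩ {ω | c < Y ω}) = 0 ∧ P (Aᶜ ∩ {ω | Y ω < c}) = 0 ∧
      (P {ω | Y ω < c} = 0 ∨ (P A).toReal = α) := by
  rw [tailMean_eq_of_isQuantile hY hneg hα hlt hle, condExpEvent, inv_mul_eq_div] at heq
  have hint : IntegrableOn Y {ω | Y ω ≤ c} P :=
    integrableOn_setOf_le_of_integrable_negPart hY hneg c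
  have hβ : 0 < (P A).toReal := hα.1.trans_le hPA
  have hkey : (P A).toReal * ∫ ω in {ω | Y ω ≤ c}, (Y ω - c) ∂P
      = α * ∫ ω in A, (Y ω - c) ∂P := by
    rw [div_eq_div_iff hα.1.ne' hβ.ne'] at heq
    rw [integral_sub hint (integrable_const c), integral_sub hAint (integrable_const c),
      setIntegral_const, setIntegral_const, smul_eq_mul, smul_eq_mul, measureReal_def,
      measureReal_def]
    linear_combination heq
  set T := {ω | Y ω ≤ c}
  set β := (P A).toReal
  have hT : MeasurableSet T := hY measurableSet_Iic
  have hgT : IntegrableOn (fun ω => Y ω - c) T P := hint.sub (integrable_const c)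
  have hgA : IntegrableOn (fun ω => Y ω - c) A P := hAint.sub (integrable_const c)
  rw [← integral_inter_add_sdiff hT hgA, ← integral_inter_add_sdiff hA hgT, inter_comm T A] at hkey
  set a := ∫ ω in A ∩ T, (Y ω - c) ∂P
  set b := ∫ ω in A \ T, (Y ω - c) ∂P
  set d := ∫ ω in T \ A, (Y ω - c) ∂P
  have ha : a ≤ 0 := setIntegral_nonpos (hA.inter hT) fun ω h => sub_nonpos.2 h.2
  have hb : 0 ≤ b := setIntegral_nonneg (hA.diff hT) fun ω h => (sub_pos.2 (not_le.1 h.2)).le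
  have hd : d ≤ 0 := setIntegral_nonpos (hT.diff hA) fun ω h => sub_nonpos.2 h.1
  obtain ⟨hb0, hd0, hβα⟩ := eq_zero_of_mul_add_eq_mul_add hα.1 hPA ha hb hd hkey
  refine ⟨?_, ?_, ?_⟩
  · refine measure_mono_null ?_ (measure_inter_setOf_pos_eq_zero_of_setIntegral_eq_zero
      (hA.diff hT) (fun ω h => (sub_pos.2 (not_le.1 h.2)).le) (hgA.mono_set sdiff_subset) hb0)
    rintro ω ⟨hωA, hω : c < Y ω⟩
    exact ⟨⟨hωA, hω.not_ge⟩, sub_pos.2 hω⟩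
  · refine measure_mono_null ?_ (measure_inter_setOf_neg_eq_zero_of_setIntegral_eq_zero
      (hT.diff hA) (fun ω h => sub_nonpos.2 h.1) (hgT.mono_set sdiff_subset) hd0)
    rintro ω ⟨hωA, hω : Y ω < c⟩
    exact ⟨⟨hω.le, hωA⟩, sub_neg.2 hω⟩
  · rcases hβα with h | h
    · exact Or.inr h
    have hTzero : ∫ ω in T, (Y ω - c) ∂P = 0 := by
      rw [← integral_inter_add_sdiff hA hgT, inter_comm T A]
      exact (congrArg₂ (· + ·) h hd0).trans (add_zero 0)
    refine Or.inl (measure_mono_null ?_ (measure_inter_setOf_neg_eq_zero_of_setIntegral_eq_zero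
      hT (fun ω h => sub_nonpos.2 h) hgT hTzero))
    intro ω (hω : Y ω < c)
    exact ⟨hω.le, sub_neg.2 hω⟩

/-- Necessity of the conditions for equality of the tail mean of f∘X and the
conditional expectation of f∘X given A, when f is strictly separating at the quantile. -/
theorem tailMean_eq_condExp_necessary (P : Measure Ω) [IsProbabilityMeasure P] (α : ℝ)
    (hα : α ∈ Set.Ioo (0:ℝ) 1)
    (X : Ω → ℝ) (hX : Measurable X) (f : ℝ → ℝ) (hf : Measurable f)
    (hfint : Integrable (fun ω => max (-(f (X ω))) 0) P)
    (hflt : ∀ x < lowerQuantile P X α, f x < f (lowerQuantile P X α))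
    (hfgt : ∀ x, lowerQuantile P X α < x → f (lowerQuantile P X α) < f x)
    (A : Set Ω) (hA : MeasurableSet A) (hPA : α ≤ (P A).toReal)
    (hAint : Integrable (fun ω => |f (X ω)|) (P.restrict A))
    (heq : tailMean P (fun ω => f (X ω)) α = condExpEvent P (fun ω => f (X ω)) A) :
    P (A ∩ {ω | lowerQuantile P X α < X ω}) = 0 ∧
    (P {ω | X ω < lowerQuantile P X α} = 0 ∨
      (0 < P {ω | X ω < lowerQuantile P X α} ∧
        P (Aᶜ ∩ {ω | X ω < lowerQuantile P X α}) = 0 ∧ (P A).toReal = α)) := by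
  set q := lowerQuantile P X α
  have hY : Measurable fun ω => f (X ω) := hf.comp hX
  have hgt_set : {ω | f q < f (X ω)} = {ω | q < X ω} :=
    Set.ext fun ω => lt_apply_iff_of_separates hflt hfgt (X ω)
  have hlt_set : {ω | f (X ω) < f q} = {ω | X ω < q} :=
    Set.ext fun ω => apply_lt_iff_of_separates hflt hfgt (X ω)
  have hle_set : {ω | f (X ω) ≤ f q} = {ω | X ω ≤ q} :=
    Set.ext fun ω => apply_le_iff_of_separates hflt hfgt (X ω)
  have hAint_on : IntegrableOn (fun ω => f (X ω)) A P :=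
    (integrable_norm_iff hY.aestronglyMeasurable).1 (by simpa only [Real.norm_eq_abs] using hAint)
  obtain ⟨hright, hleft, hmass⟩ := tailMean_eq_condExpEvent_necessary_of_isQuantile hY hfint hα
    (hlt_set ▸ measure_lt_lowerQuantile_le hX hα.1) (hle_set ▸ le_measure_le_lowerQuantile hX hα.2)
    hA hPA hAint_on heq
  rw [hgt_set] at hright
  rw [hlt_set] at hleft hmass
  exact ⟨hright, (eq_zero_or_pos _).imp_right fun hpos =>
    ⟨hpos, hleft, hmass.resolve_left hpos.ne'⟩⟩

end
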